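/- Let u be a map from S¹ into a coordinate chart of a compact Riemannian manifold N where the Christoffel symbols are bounded by C_N. If |u_θ| ≤ η with η sufficiently small (depending on C_N), then ∫_{S¹}|∇_θ u_θ|² dθ ≥ (1 − Cη) ∫_{S¹}|u_θ|² dθ, i.e. a Poincaré inequality holds for the covariant derivative of the nonconstant Fourier modes up to a curvature error. -/

import Mathlib

/-!
Split `w' = (w' + Γv) - Γv` and weigh the two pieces by Young's inequality with parameter `η`:
`(1 - η) ‖w'‖² ≤ ‖w' + Γv‖² + ‖Γv‖² / η`. Since `‖Γv‖ ≤ C_N ‖w‖² ≤ C_N η ‖w‖`, the last term is at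
most `C_N² η ‖w‖²`. Integrating and applying the Poincaré inequality `∫ ‖w‖² ≤ ∫ ‖w'‖²` gives the
claim with `η₀ = 1` and `C = 1 + C_N²`.
-/

open intervalIntegral

theorem one_sub_mul_norm_sq_le_norm_add_sq_add_div {E : Type*} [SeminormedAddCommGroup E]
    (a b : E) {ε : ℝ} (hε : 0 < ε) :
    (1 - ε) * ‖a‖ ^ 2 ≤ ‖a + b‖ ^ 2 + ‖b‖ ^ 2 / ε := by
  have hb : 0 ≤ ‖b‖ ^ 2 / ε := by positivity
  rcases le_total ε 1 with hε1 | hε1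
  · have ha : ‖a‖ ≤ ‖a + b‖ + ‖b‖ := by simpa using norm_sub_le (a + b) b
    have ha2 : ‖a‖ ^ 2 ≤ (‖a + b‖ + ‖b‖) ^ 2 := pow_le_pow_left₀ (norm_nonneg a) ha 2
    rw [← sub_nonneg] at hε1
    have young : ε * ((1 - ε) * (‖a + b‖ + ‖b‖) ^ 2) ≤ ε * (‖a + b‖ ^ 2 + ‖b‖ ^ 2 / ε) := by
      rw [mul_add, mul_div_cancel₀ _ hε.ne']
      nlinarith [sq_nonneg (ε * ‖a + b‖ - (1 - ε) * ‖b‖), sq_nonneg ‖b‖]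
    calc (1 - ε) * ‖a‖ ^ 2 ≤ (1 - ε) * (‖a + b‖ + ‖b‖) ^ 2 := mul_le_mul_of_nonneg_left ha2 hε1
      _ ≤ ‖a + b‖ ^ 2 + ‖b‖ ^ 2 / ε := le_of_mul_le_mul_left young hε
  · nlinarith [sq_nonneg ‖a‖, sq_nonneg ‖a + b‖]

theorem one_sub_mul_norm_sq_le_of_norm_le_mul_sq {E F : Type*} [SeminormedAddCommGroup E]
    [SeminormedAddCommGroup F] {a b : E} {c : F} {K η : ℝ} (hη : 0 < η)
    (hb : ‖b‖ ≤ K * ‖c‖ ^ 2) (hc : ‖c‖ ≤ η) :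
    (1 - η) * ‖a‖ ^ 2 ≤ ‖a + b‖ ^ 2 + K ^ 2 * η * ‖c‖ ^ 2 := by
  have hb2 : ‖b‖ ^ 2 ≤ K ^ 2 * η ^ 2 * ‖c‖ ^ 2 :=
    calc ‖b‖ ^ 2 ≤ (K * ‖c‖ ^ 2) ^ 2 := pow_le_pow_left₀ (norm_nonneg b) hb 2
      _ = K ^ 2 * ‖c‖ ^ 2 * ‖c‖ ^ 2 := by ring
      _ ≤ K ^ 2 * ‖c‖ ^ 2 * η ^ 2 := by gcongr
      _ = K ^ 2 * η ^ 2 * ‖c‖ ^ 2 := by ring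
  have hdiv : ‖b‖ ^ 2 / η ≤ K ^ 2 * η * ‖c‖ ^ 2 := by
    rw [div_le_iff₀ hη]
    linarith
  linarith [one_sub_mul_norm_sq_le_norm_add_sq_add_div a b hη]

theorem stmt17 (CN : ℝ) :
    ∃ η₀ > (0 : ℝ), ∃ C > (0 : ℝ),
      ∀ (E : Type) (_ : NormedAddCommGroup E) (_ : InnerProductSpace ℝ E)
        (w w' Γv : ℝ → E) (η : ℝ),
        0 < η → η ≤ η₀ →
        (∀ θ, HasDerivAt w (w' θ) θ) →
        (∀ θ, ‖Γv θ‖ ≤ CN * ‖w θ‖ ^ 2) →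
        (∀ θ, ‖w θ‖ ≤ η) →
        IntervalIntegrable (fun θ => ‖w θ‖ ^ 2) MeasureTheory.volume 0 (2 * Real.pi) →
        IntervalIntegrable (fun θ => ‖w' θ‖ ^ 2) MeasureTheory.volume 0 (2 * Real.pi) →
        IntervalIntegrable (fun θ => ‖w' θ + Γv θ‖ ^ 2) MeasureTheory.volume 0
          (2 * Real.pi) →
        ((∫ θ in (0 : ℝ)..(2 * Real.pi), ‖w θ‖ ^ 2) ≤
          ∫ θ in (0 : ℝ)..(2 * Real.pi), ‖w' θ‖ ^ 2) →
        (1 - C * η) * (∫ θ in (0 : ℝ)..(2 * Real.pi), ‖w θ‖ ^ 2) ≤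
          ∫ θ in (0 : ℝ)..(2 * Real.pi), ‖w' θ + Γv θ‖ ^ 2 := by
  refine ⟨1, one_pos, 1 + CN ^ 2, by positivity, ?_⟩
  intro E _ _ w w' Γv η hη hη1 _ hΓ hwη hIw hIw' hIS hP
  have integrated : (1 - η) * (∫ θ in (0 : ℝ)..(2 * Real.pi), ‖w' θ‖ ^ 2) ≤
      (∫ θ in (0 : ℝ)..(2 * Real.pi), ‖w' θ + Γv θ‖ ^ 2) +
        CN ^ 2 * η * ∫ θ in (0 : ℝ)..(2 * Real.pi), ‖w θ‖ ^ 2 := by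
    rw [← integral_const_mul, ← integral_const_mul, ← integral_add hIS (hIw.const_mul _)]
    exact integral_mono_on (by positivity) (hIw'.const_mul _) (hIS.add (hIw.const_mul _))
      fun θ _ => one_sub_mul_norm_sq_le_of_norm_le_mul_sq hη (hΓ θ) (hwη θ)
  have poincare := mul_le_mul_of_nonneg_left hP (sub_nonneg.mpr hη1)
  linarith
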